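/- arXiv:1412.0845 — 6 statements merged into one kernel-verified Lean document; each statement's English description precedes it below -/
import Mathlib

section
/- The linear program PP_PNE(SUM, T*_w, σ*, o*) is feasible with objective value 1: fixing any basis index k* ∈ [r], the assignment setting v_{k*}^e = (n·f_{k*}(w_j)·w_j·Σ_{i∈N} β_{ij})^{-1} for e ∈ {e({j},∅), e(∅,{j})}, j ∈ N, and all other v_k^e = 0, satisfies the ε-approximate equilibrium constraints for each player, satisfies the normalization constraint Σ_e Σ_k v_k^e f_k(n_e(o*))·Σ_i Σ_{j: e∈o*_j} β_{ij}w_j ≤ 1, and yields objective Σ_e Σ_k v_k^e f_k(n_e(σ*))·Σ_i Σ_{j: e∈σ*_j} β_{ij}w_j = 1. -/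
open Finset

def cong {n : ℕ} {E : Type} [Fintype E] [DecidableEq E]
    (w : Fin n → ℝ) (σ : Fin n → Finset E) (e : E) : ℝ :=
  ∑ i ∈ univ.filter (fun i => e ∈ σ i), w i

def lat {r : ℕ} {E : Type} (f : Fin r → ℝ → ℝ) (v : E → Fin r → ℝ) (e : E) (t : ℝ) : ℝ :=
  ∑ k, v e k * f k t

abbrev RepRes (n : ℕ) := Finset (Fin n) × Finset (Fin n)

def sstar (n : ℕ) (i : Fin n) : Finset (RepRes n) :=
  univ.filter (fun e => i ∈ e.1)

def ostar (n : ℕ) (i : Fin n) : Finset (RepRes n) :=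
  univ.filter (fun e => i ∈ e.2)

/-- The explicit feasible solution: `v_{k*}^e = (n·f_{k*}(w_j)·w_j·∑_i β_{ij})⁻¹`
for `e ∈ {e({j},∅), e(∅,{j})}`, `j ∈ N`, and all other coordinates `0`. -/
noncomputable def vsol {n r : ℕ} (w : Fin n → ℝ) (f : Fin r → ℝ → ℝ)
    (β : Fin n → Fin n → ℝ) (kstar : Fin r) (e : RepRes n) (k : Fin r) : ℝ :=
  if k = kstar then
    ∑ j : Fin n,
      if e = ({j}, (∅ : Finset (Fin n))) ∨ e = ((∅ : Finset (Fin n)), {j}) then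
        ((n : ℝ) * f kstar (w j) * w j * ∑ i, β i j)⁻¹
      else 0
  else 0

/-!
The solution `vsol` puts weight only on the private resources `e({j},∅)` (used by `j` in `σ*`
alone) and `e(∅,{j})` (used by `j` in `o*` alone), with coefficient `c_j` chosen so that
`c_j · f_{k*}(w_j) · w_j · ∑_i β_{ij} = 1/n`. Since `f_{k*}(0) = 0`, each of the objective and
the normalization sums has exactly one nonzero term per player, equal to `1/n`; the two sums are
exchanged by swapping the two coordinates of a resource. In player `i`'s equilibrium constraint
the only surviving resources are `e({i},∅)` and `e(∅,{i})`, both with congestion `w_i`, so the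
constraint reads `P - (1 + ε) P ≤ 0` with `P = α_{ii} / (n ∑_l β_{li}) ≥ 0`.
-/

noncomputable def vsolCoeff {n r : ℕ} (w : Fin n → ℝ) (f : Fin r → ℝ → ℝ)
    (β : Fin n → Fin n → ℝ) (kstar : Fin r) (j : Fin n) : ℝ :=
  ((n : ℝ) * f kstar (w j) * w j * ∑ i, β i j)⁻¹

section Resources

variable {n : ℕ}

lemma mem_sstar {i : Fin n} {e : RepRes n} : e ∈ sstar n i ↔ i ∈ e.1 := by
  simp [sstar]

lemma mem_ostar {i : Fin n} {e : RepRes n} : e ∈ ostar n i ↔ i ∈ e.2 := by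
  simp [ostar]

lemma filter_mem_sstar (e : RepRes n) : univ.filter (fun j => e ∈ sstar n j) = e.1 := by
  ext; simp [mem_sstar]

lemma filter_mem_ostar (e : RepRes n) : univ.filter (fun j => e ∈ ostar n j) = e.2 := by
  ext; simp [mem_ostar]

lemma cong_sstar (w : Fin n → ℝ) (e : RepRes n) :
    cong w (fun j => sstar n j) e = ∑ i ∈ e.1, w i := by
  rw [cong, filter_mem_sstar]

lemma cong_ostar (w : Fin n → ℝ) (e : RepRes n) :
    cong w (fun j => ostar n j) e = cong w (fun j => sstar n j) e.swap := by
  rw [cong_sstar, cong, filter_mem_ostar, Prod.fst_swap]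

end Resources

section Solution

variable {n r : ℕ} (w : Fin n → ℝ) (f : Fin r → ℝ → ℝ) (β : Fin n → Fin n → ℝ) (kstar : Fin r)

lemma vsol_swap (e : RepRes n) : vsol w f β kstar e.swap = vsol w f β kstar e := by
  funext k
  obtain ⟨a, b⟩ := e
  simp only [vsol, Prod.swap_prod_mk, Prod.mk.injEq, and_comm, or_comm]

lemma lat_vsol_swap (e : RepRes n) (t : ℝ) :
    lat f (vsol w f β kstar) e.swap t = lat f (vsol w f β kstar) e t := by
  simp only [lat, vsol_swap]

lemma lat_vsol (e : RepRes n) (t : ℝ) :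
    lat f (vsol w f β kstar) e t =
      (∑ j, if e = ({j}, ∅) ∨ e = (∅, {j}) then vsolCoeff w f β kstar j else 0) * f kstar t := by
  simp only [lat, vsol, ite_mul, zero_mul, sum_ite_eq', mem_univ, if_true, vsolCoeff]

lemma sum_lat_vsol_mul (S : Finset (RepRes n)) (t h : RepRes n → ℝ) :
    ∑ e ∈ S, lat f (vsol w f β kstar) e (t e) * h e =
      ∑ j, ((if ({j}, ∅) ∈ S then
              vsolCoeff w f β kstar j * (f kstar (t ({j}, ∅)) * h ({j}, ∅)) else 0) +
            (if (∅, {j}) ∈ S then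
              vsolCoeff w f β kstar j * (f kstar (t (∅, {j})) * h (∅, {j})) else 0)) := by
  have split : ∀ e ∈ S, lat f (vsol w f β kstar) e (t e) * h e =
      ∑ j, ((if e = ({j}, ∅) then vsolCoeff w f β kstar j * (f kstar (t e) * h e) else 0) +
            (if e = (∅, {j}) then vsolCoeff w f β kstar j * (f kstar (t e) * h e) else 0)) := by
    intro e _
    rw [lat_vsol, sum_mul, sum_mul]
    refine sum_congr rfl fun j _ => ?_
    by_cases hl : e = ({j}, ∅)
    · subst hl
      simp [mul_assoc]
    · by_cases hr : e = (∅, {j}) <;> simp [hl, hr, mul_assoc]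
  rw [sum_congr rfl split, sum_comm]
  simp only [sum_add_distrib, sum_ite_eq']

lemma vsolCoeff_mul {j : Fin n} (hf : f kstar (w j) ≠ 0) (hw : w j ≠ 0) :
    vsolCoeff w f β kstar j * (f kstar (w j) * w j) = ((n : ℝ) * ∑ i, β i j)⁻¹ := by
  rw [vsolCoeff]
  field_simp

end Solution

section Constraints

variable {n r : ℕ} {w : Fin n → ℝ} {f : Fin r → ℝ → ℝ} {β : Fin n → Fin n → ℝ} {kstar : Fin r}

lemma sum_sstar_sdiff_ostar_lat_vsol (α : Fin n → Fin n → ℝ) (i : Fin n) :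
    ∑ e ∈ sstar n i \ ostar n i,
        lat f (vsol w f β kstar) e (cong w (fun j => sstar n j) e) *
          (∑ j ∈ univ.filter (fun j => e ∈ sstar n j), α i j * w j) =
      vsolCoeff w f β kstar i * (f kstar (w i) * (α i i * w i)) := by
  rw [sum_lat_vsol_mul]
  simp only [filter_mem_sstar, cong_sstar]
  simp [mem_sstar, mem_ostar]

lemma sum_ostar_sdiff_sstar_lat_vsol (α : Fin n → Fin n → ℝ) (i : Fin n) :
    ∑ e ∈ ostar n i \ sstar n i,
        lat f (vsol w f β kstar) e (cong w (fun j => sstar n j) e + w i) *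
          (α i i * w i + ∑ j ∈ univ.filter (fun j => e ∈ sstar n j), α i j * w j) =
      vsolCoeff w f β kstar i * (f kstar (w i) * (α i i * w i)) := by
  rw [sum_lat_vsol_mul]
  simp only [filter_mem_sstar, cong_sstar]
  simp [mem_sstar, mem_ostar]

lemma equilibrium_vsol (α : Fin n → Fin n → ℝ) (i : Fin n) {ε : ℝ} (hε : 0 ≤ ε)
    (hα : 0 ≤ α i i) (hf : f kstar (w i) ≠ 0) (hw : w i ≠ 0) (hβ : 0 ≤ ∑ l, β l i) :
    (∑ e ∈ sstar n i \ ostar n i,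
        lat f (vsol w f β kstar) e (cong w (fun j => sstar n j) e) *
          (∑ j ∈ univ.filter (fun j => e ∈ sstar n j), α i j * w j))
      - (1 + ε) * ∑ e ∈ ostar n i \ sstar n i,
          lat f (vsol w f β kstar) e (cong w (fun j => sstar n j) e + w i) *
            (α i i * w i + ∑ j ∈ univ.filter (fun j => e ∈ sstar n j), α i j * w j)
      ≤ 0 := by
  rw [sum_sstar_sdiff_ostar_lat_vsol, sum_ostar_sdiff_sstar_lat_vsol]
  have hP : 0 ≤ vsolCoeff w f β kstar i * (f kstar (w i) * (α i i * w i)) := by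
    calc 0 ≤ α i i * ((n : ℝ) * ∑ l, β l i)⁻¹ := by positivity
      _ = _ := by rw [← vsolCoeff_mul w f β kstar hf hw]; ring
  nlinarith

lemma objective_vsol (hn : n ≠ 0) (hf0 : f kstar 0 = 0) (hf : ∀ j, f kstar (w j) ≠ 0)
    (hw : ∀ j, w j ≠ 0) (hβ : ∀ j, ∑ i, β i j ≠ 0) :
    ∑ e : RepRes n,
        lat f (vsol w f β kstar) e (cong w (fun j => sstar n j) e) *
          (∑ i, ∑ j ∈ univ.filter (fun j => e ∈ sstar n j), β i j * w j) = 1 := by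
  rw [sum_lat_vsol_mul]
  simp only [mem_univ, if_true, filter_mem_sstar, cong_sstar, sum_singleton, sum_empty, hf0,
    zero_mul, mul_zero, add_zero]
  have each : ∀ j, vsolCoeff w f β kstar j * (f kstar (w j) * ∑ i, β i j * w j) = (n : ℝ)⁻¹ := by
    intro j
    calc _ = vsolCoeff w f β kstar j * (f kstar (w j) * w j) * ∑ i, β i j := by
            rw [← sum_mul]; ring
      _ = (n : ℝ)⁻¹ := by
            rw [vsolCoeff_mul w f β kstar (hf j) (hw j)]
            field_simp [hβ j]
  simp [each, hn]

lemma normalization_eq_objective :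
    ∑ e : RepRes n,
        lat f (vsol w f β kstar) e (cong w (fun j => ostar n j) e) *
          (∑ i, ∑ j ∈ univ.filter (fun j => e ∈ ostar n j), β i j * w j) =
      ∑ e : RepRes n,
        lat f (vsol w f β kstar) e (cong w (fun j => sstar n j) e) *
          (∑ i, ∑ j ∈ univ.filter (fun j => e ∈ sstar n j), β i j * w j) := by
  refine Fintype.sum_equiv (Equiv.prodComm _ _) _ _ fun e => ?_
  rw [Equiv.prodComm_apply, cong_ostar, filter_mem_ostar, filter_mem_sstar, lat_vsol_swap,
    Prod.fst_swap]

end Constraints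

theorem stmt8_general {n r : ℕ} (hn : 0 < n) (w : Fin n → ℝ) (hw : ∀ i, 0 < w i)
    (f : Fin r → ℝ → ℝ) (hf0 : ∀ k x, f k x = 0 ↔ x = 0)
    (α : Fin n → Fin n → ℝ) (hα : ∀ i, 0 ≤ α i i)
    (β : Fin n → Fin n → ℝ) (hβcol : ∀ j, 0 < ∑ i, β i j)
    (ε : ℝ) (hε : 0 ≤ ε) (kstar : Fin r) :
    -- (i) the ε-approximate equilibrium constraint of each player holds
    (∀ i : Fin n,
      (∑ e ∈ sstar n i \ ostar n i,
          lat f (vsol w f β kstar) e (cong w (fun j => sstar n j) e) *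
            (∑ j ∈ univ.filter (fun j => e ∈ sstar n j), α i j * w j))
        - (1 + ε) * ∑ e ∈ ostar n i \ sstar n i,
            lat f (vsol w f β kstar) e (cong w (fun j => sstar n j) e + w i) *
              (α i i * w i + ∑ j ∈ univ.filter (fun j => e ∈ sstar n j), α i j * w j)
      ≤ 0) ∧
    -- (ii) the normalization constraint holds
    (∑ e : RepRes n,
        lat f (vsol w f β kstar) e (cong w (fun j => ostar n j) e) *
          (∑ i, ∑ j ∈ univ.filter (fun j => e ∈ ostar n j), β i j * w j) ≤ 1) ∧
    -- (iii) the objective value equals 1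
    (∑ e : RepRes n,
        lat f (vsol w f β kstar) e (cong w (fun j => sstar n j) e) *
          (∑ i, ∑ j ∈ univ.filter (fun j => e ∈ sstar n j), β i j * w j) = 1) := by
  have hfw : ∀ j, f kstar (w j) ≠ 0 := fun j => (hf0 kstar _).not.mpr (hw j).ne'
  have hobj := objective_vsol hn.ne' ((hf0 kstar 0).mpr rfl) hfw (fun j => (hw j).ne')
    (fun j => (hβcol j).ne')
  refine ⟨fun i => ?_, (normalization_eq_objective.trans hobj).le, hobj⟩
  exact equilibrium_vsol α i hε (hα i) (hfw i) (hw i).ne' (hβcol i).le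

/-- the linear program `PP_PNE(SUM, T*_w, σ*, o*)` is feasible with
objective value 1, as witnessed by the explicit solution `vsol`. -/
theorem stmt8 {n r : ℕ} (hn : 0 < n) (w : Fin n → ℝ) (hw : ∀ i, 0 < w i)
    (f : Fin r → ℝ → ℝ) (hf0 : ∀ k x, f k x = 0 ↔ x = 0) (hfnn : ∀ k x, 0 ≤ f k x)
    (α : Fin n → Fin n → ℝ) (hα : ∀ i, 0 ≤ α i i)
    (β : Fin n → Fin n → ℝ) (hβ : ∀ i j, 0 ≤ β i j) (hβcol : ∀ j, 0 < ∑ i, β i j)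
    (ε : ℝ) (hε : 0 ≤ ε) (kstar : Fin r) :
    -- (i) the ε-approximate equilibrium constraint of each player holds
    (∀ i : Fin n,
      (∑ e ∈ sstar n i \ ostar n i,
          lat f (vsol w f β kstar) e (cong w (fun j => sstar n j) e) *
            (∑ j ∈ univ.filter (fun j => e ∈ sstar n j), α i j * w j))
        - (1 + ε) * ∑ e ∈ ostar n i \ sstar n i,
            lat f (vsol w f β kstar) e (cong w (fun j => sstar n j) e + w i) *
              (α i i * w i + ∑ j ∈ univ.filter (fun j => e ∈ sstar n j), α i j * w j)
      ≤ 0) ∧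
    -- (ii) the normalization constraint holds
    (∑ e : RepRes n,
        lat f (vsol w f β kstar) e (cong w (fun j => ostar n j) e) *
          (∑ i, ∑ j ∈ univ.filter (fun j => e ∈ ostar n j), β i j * w j) ≤ 1) ∧
    -- (iii) the objective value equals 1
    (∑ e : RepRes n,
        lat f (vsol w f β kstar) e (cong w (fun j => sstar n j) e) *
          (∑ i, ∑ j ∈ univ.filter (fun j => e ∈ sstar n j), β i j * w j) = 1) :=
  stmt8_general hn w hw f hf0 α hα β hβcol ε hε kstar
end

section
/- Extension Lemma (utilitarian case): Let (y*, γ*) with y*_i ≥ 0 and γ* ≥ 0 satisfy, for every pair of subsets (P,Q) of players and every k ∈ [r], the 'pure dual constraint': Σ_{i∈P\Q} y*_i f_k(W(P))·Σ_{j∈P} α_{ij}w_j − (1+ε)·Σ_{i∈Q\P} y*_i f_k(W(P)+w_i)·(α_{ii}w_i + Σ_{j∈P} α_{ij}w_j) + γ*·f_k(W(Q))·Σ_i Σ_{j∈Q} β_{ij}w_j ≥ f_k(W(P))·Σ_i Σ_{j∈P} β_{ij}w_j, where W(S) = Σ_{i∈S} w_i. Then for any congestion model T_w, any probability distribution p over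 its strategy profiles, any profile o, any resource e, and any k, the averaged constraint Σ_σ p_σ·[LHS_e,k(σ,o)] + γ*·f_k(n_e(o))·Σ_i Σ_{j: e∈o_j} β_{ij}w_j ≥ Σ_σ p_σ·f_k(n_e(σ))·Σ_i Σ_{j: e∈σ_j} β_{ij}w_j holds, where LHS_e,k(σ,o) = Σ_{i: e∈σ_i\o_i} y*_i f_k(n_e(σ))·Σ_{j: e∈σ_j} α_{ij}w_j − (1+ε)·Σ_{i: e∈o_i\σ_i} y*_i f_k(n_e(σ)+w_i)·(α_{ii}w_i + Σ_{j: e∈σ_j} α_{ij}w_j). -/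
open Finset

/-- Extension Lemma, utilitarian case: a pair `(y*, γ*)` satisfying all
'pure dual constraints' (indexed by pairs of player subsets `(P,Q)` and basis indices
`k`) satisfies the averaged dual constraint of `DP_CCE` for every congestion model,
probability distribution over profiles, optimum profile, resource and basis index. -/
theorem stmt9 {n r : ℕ} (w : Fin n → ℝ) (hw : ∀ i, 0 < w i)
    (f : Fin r → ℝ → ℝ) (α β : Fin n → Fin n → ℝ) (ε : ℝ) (hε : 0 ≤ ε)
    (y : Fin n → ℝ) (γ : ℝ) (hy : ∀ i, 0 ≤ y i) (hγ : 0 ≤ γ)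
    (hpure : ∀ (P Q : Finset (Fin n)) (k : Fin r),
      (∑ i ∈ P \ Q, y i * f k (∑ i' ∈ P, w i') * (∑ j ∈ P, α i j * w j))
        - (1 + ε) * ∑ i ∈ Q \ P,
            y i * f k ((∑ i' ∈ P, w i') + w i) * (α i i * w i + ∑ j ∈ P, α i j * w j)
        + γ * f k (∑ i' ∈ Q, w i') * (∑ i, ∑ j ∈ Q, β i j * w j)
      ≥ f k (∑ i' ∈ P, w i') * (∑ i, ∑ j ∈ P, β i j * w j)) :
    ∀ (E : Type) [Fintype E] [DecidableEq E]
      (p : (Fin n → Finset E) → ℝ), (∀ σ, 0 ≤ p σ) → (∑ σ, p σ = 1) →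
      ∀ (o : Fin n → Finset E) (e : E) (k : Fin r),
      (∑ σ, p σ *
          ((∑ i ∈ univ.filter (fun i => e ∈ σ i ∧ e ∉ o i),
              y i * f k (cong w σ e) *
                (∑ j ∈ univ.filter (fun j => e ∈ σ j), α i j * w j))
            - (1 + ε) * ∑ i ∈ univ.filter (fun i => e ∈ o i ∧ e ∉ σ i),
                y i * f k (cong w σ e + w i) *
                  (α i i * w i + ∑ j ∈ univ.filter (fun j => e ∈ σ j), α i j * w j)))
        + γ * f k (cong w o e) * (∑ i, ∑ j ∈ univ.filter (fun j => e ∈ o j), β i j * w j)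
      ≥ ∑ σ, p σ *
          (f k (cong w σ e) * (∑ i, ∑ j ∈ univ.filter (fun j => e ∈ σ j), β i j * w j)) := by
  intro E _ _ p hp hp1 o e k
  set c := γ * f k (cong w o e) *
      (∑ i, ∑ j ∈ univ.filter (fun j => e ∈ o j), β i j * w j) with hc
  have key : ∀ σ : Fin n → Finset E,
      f k (cong w σ e) * (∑ i, ∑ j ∈ univ.filter (fun j => e ∈ σ j), β i j * w j) ≤
      ((∑ i ∈ univ.filter (fun i => e ∈ σ i ∧ e ∉ o i),
          y i * f k (cong w σ e) *
            (∑ j ∈ univ.filter (fun j => e ∈ σ j), α i j * w j))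
        - (1 + ε) * ∑ i ∈ univ.filter (fun i => e ∈ o i ∧ e ∉ σ i),
            y i * f k (cong w σ e + w i) *
              (α i i * w i + ∑ j ∈ univ.filter (fun j => e ∈ σ j), α i j * w j)) + c := by
    intro σ
    have h := hpure (univ.filter (fun i => e ∈ σ i)) (univ.filter (fun i => e ∈ o i)) k
    have h1 : univ.filter (fun i => e ∈ σ i) \ univ.filter (fun i => e ∈ o i)
        = univ.filter (fun i : Fin n => e ∈ σ i ∧ e ∉ o i) := by ext i; simp
    have h2 : univ.filter (fun i => e ∈ o i) \ univ.filter (fun i => e ∈ σ i)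
        = univ.filter (fun i : Fin n => e ∈ o i ∧ e ∉ σ i) := by ext i; simp
    rw [h1, h2] at h
    simpa [cong, hc] using h
  have hsum : ∑ σ, p σ * c = c := by rw [← Finset.sum_mul, hp1, one_mul]
  calc ∑ σ, p σ * (f k (cong w σ e) *
          (∑ i, ∑ j ∈ univ.filter (fun j => e ∈ σ j), β i j * w j))
      ≤ ∑ σ, p σ * (((∑ i ∈ univ.filter (fun i => e ∈ σ i ∧ e ∉ o i),
              y i * f k (cong w σ e) *
                (∑ j ∈ univ.filter (fun j => e ∈ σ j), α i j * w j))
            - (1 + ε) * ∑ i ∈ univ.filter (fun i => e ∈ o i ∧ e ∉ σ i),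
                y i * f k (cong w σ e + w i) *
                  (α i i * w i + ∑ j ∈ univ.filter (fun j => e ∈ σ j), α i j * w j)) + c) := by
        apply Finset.sum_le_sum
        intro σ _
        exact mul_le_mul_of_nonneg_left (key σ) (hp σ)
    _ = (∑ σ, p σ *
          ((∑ i ∈ univ.filter (fun i => e ∈ σ i ∧ e ∉ o i),
              y i * f k (cong w σ e) *
                (∑ j ∈ univ.filter (fun j => e ∈ σ j), α i j * w j))
            - (1 + ε) * ∑ i ∈ univ.filter (fun i => e ∈ o i ∧ e ∉ σ i),
                y i * f k (cong w σ e + w i) *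
                  (α i i * w i + ∑ j ∈ univ.filter (fun j => e ∈ σ j), α i j * w j))) + c := by
        simp only [mul_add]
        rw [Finset.sum_add_distrib, hsum]
end

section
/- Smoothness Argument: If a cost minimization game G is (λ,μ)-smooth under a sum-bounded social function SF, with λ > 0 and μ < 1, then for every pure Nash equilibrium σ and every social optimum o with SF(o) > 0, it holds that SF(σ) ≤ (λ/(1−μ))·SF(o). -/
open Finset

/-!
At a Nash equilibrium σ no player gains by deviating to its strategy in o, so
SF(σ) ≤ ∑ᵢ cᵢ(σ) ≤ ∑ᵢ cᵢ(σ₋ᵢ, oᵢ) ≤ λ·SF(o) + μ·SF(σ) by sum-boundedness and smoothness;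
since μ < 1 this rearranges to SF(σ) ≤ λ/(1−μ)·SF(o).
-/

lemma le_div_one_sub_mul_of_le_mul_add {x y a μ : ℝ} (hμ : μ < 1) (h : x ≤ a * y + μ * x) :
    x ≤ a / (1 - μ) * y := by
  rw [div_mul_eq_mul_div, le_div_iff₀ (by linarith)]
  linarith

lemma social_le_of_nash_of_smooth {n : ℕ} {S : Fin n → Type}
    (c : ((i : Fin n) → S i) → Fin n → ℝ) (SF : ((i : Fin n) → S i) → ℝ)
    (hsb : ∀ σ, SF σ ≤ ∑ i, c σ i) (lam μ : ℝ)
    (hsmooth : ∀ σ σ' : (i : Fin n) → S i,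
      (∑ i, c (Function.update σ i (σ' i)) i) ≤ lam * SF σ' + μ * SF σ)
    (σ o : (i : Fin n) → S i)
    (hne : ∀ (i : Fin n) (x : S i), c σ i ≤ c (Function.update σ i x) i) :
    SF σ ≤ lam * SF o + μ * SF σ :=
  calc SF σ ≤ ∑ i, c σ i := hsb σ
    _ ≤ ∑ i, c (Function.update σ i (o i)) i := sum_le_sum fun i _ => hne i (o i)
    _ ≤ lam * SF o + μ * SF σ := hsmooth σ o

theorem stmt10_general {n : ℕ} {S : Fin n → Type}
    (c : ((i : Fin n) → S i) → Fin n → ℝ) (SF : ((i : Fin n) → S i) → ℝ)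
    (hsb : ∀ σ, SF σ ≤ ∑ i, c σ i)
    (lam μ : ℝ) (hμ : μ < 1)
    (hsmooth : ∀ σ σ' : (i : Fin n) → S i,
      (∑ i, c (Function.update σ i (σ' i)) i) ≤ lam * SF σ' + μ * SF σ)
    (σ o : (i : Fin n) → S i)
    (hne : ∀ (i : Fin n) (x : S i), c σ i ≤ c (Function.update σ i x) i) :
    SF σ ≤ (lam / (1 - μ)) * SF o :=
  le_div_one_sub_mul_of_le_mul_add hμ
    (social_le_of_nash_of_smooth c SF hsb lam μ hsmooth σ o hne)

/-- Smoothness Argument: if a cost minimization game is (λ,μ)-smooth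
under a sum-bounded social function SF, with λ > 0 and μ < 1, then every pure Nash
equilibrium σ and social optimum o with SF(o) > 0 satisfy SF(σ) ≤ (λ/(1−μ))·SF(o). -/
theorem stmt10 {n : ℕ} {S : Fin n → Type} [∀ i, Fintype (S i)]
    (c : ((i : Fin n) → S i) → Fin n → ℝ) (SF : ((i : Fin n) → S i) → ℝ)
    (hc : ∀ σ i, 0 ≤ c σ i) (hSFnn : ∀ σ, 0 ≤ SF σ)
    (hsb : ∀ σ, SF σ ≤ ∑ i, c σ i)
    (lam μ : ℝ) (hlam : 0 < lam) (hμ : μ < 1)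
    (hsmooth : ∀ σ σ' : (i : Fin n) → S i,
      (∑ i, c (Function.update σ i (σ' i)) i) ≤ lam * SF σ' + μ * SF σ)
    (σ o : (i : Fin n) → S i)
    (hne : ∀ (i : Fin n) (x : S i), c σ i ≤ c (Function.update σ i x) i)
    (hopt : ∀ τ, SF o ≤ SF τ) (ho : 0 < SF o) :
    SF σ ≤ (lam / (1 - μ)) * SF o :=
  stmt10_general c SF hsb lam μ hμ hsmooth σ o hne
end

section
/- Extension Theorem for smooth games: If a cost minimization game G is (λ,μ)-smooth under a sum-bounded social function SF with λ > 0 and μ < 1, then for every coarse correlated equilibrium p (a probability distribution over profiles) and social optimum o with SF(o) > 0, it holds that Σ_σ p_σ·SF(σ) ≤ (λ/(1−μ))·SF(o). -/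
/-!
Average the coarse correlated equilibrium condition against the deviation to the optimum `o`:
the expected social cost is at most the expected total cost, which is at most the expected total
cost after every player unilaterally switches to `oᵢ`, which smoothness bounds by
`λ·SF(o) + μ·E[SF]`. Since `μ < 1`, solving for `E[SF]` gives the bound `λ / (1 - μ) · SF(o)`.
-/

open Finset

section SmoothGame

variable {ι : Type*} [Fintype ι] [DecidableEq ι] {S : ι → Type*} [Fintype (∀ i, S i)]

def IsSmoothGame (c : (∀ i, S i) → ι → ℝ) (SF : (∀ i, S i) → ℝ) (lam μ : ℝ) : Prop :=
  ∀ σ σ' : ∀ i, S i, ∑ i, c (Function.update σ i (σ' i)) i ≤ lam * SF σ' + μ * SF σ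

structure IsCoarseCorrelatedEquilibrium (c : (∀ i, S i) → ι → ℝ) (p : (∀ i, S i) → ℝ) :
    Prop where
  nonneg : ∀ σ, 0 ≤ p σ
  sum_eq_one : ∑ σ, p σ = 1
  le_deviation : ∀ i (x : S i), ∑ σ, p σ * c σ i ≤ ∑ σ, p σ * c (Function.update σ i x) i

namespace IsCoarseCorrelatedEquilibrium

variable {c : (∀ i, S i) → ι → ℝ} {p : (∀ i, S i) → ℝ}

theorem expected_total_cost_le (hp : IsCoarseCorrelatedEquilibrium c p) (o : ∀ i, S i) :
    ∑ σ, p σ * ∑ i, c σ i ≤ ∑ σ, p σ * ∑ i, c (Function.update σ i (o i)) i := by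
  simp only [mul_sum]
  rw [sum_comm]
  exact (sum_le_sum fun i _ => hp.le_deviation i (o i)).trans_eq sum_comm

theorem expected_social_le {SF : (∀ i, S i) → ℝ} {lam μ : ℝ}
    (hp : IsCoarseCorrelatedEquilibrium c p) (hsb : ∀ σ, SF σ ≤ ∑ i, c σ i)
    (hsmooth : IsSmoothGame c SF lam μ) (o : ∀ i, S i) :
    ∑ σ, p σ * SF σ ≤ lam * SF o + μ * ∑ σ, p σ * SF σ :=
  calc ∑ σ, p σ * SF σ
      ≤ ∑ σ, p σ * ∑ i, c σ i :=
        sum_le_sum fun σ _ => mul_le_mul_of_nonneg_left (hsb σ) (hp.nonneg σ)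
    _ ≤ ∑ σ, p σ * ∑ i, c (Function.update σ i (o i)) i := hp.expected_total_cost_le o
    _ ≤ ∑ σ, p σ * (lam * SF o + μ * SF σ) :=
        sum_le_sum fun σ _ => mul_le_mul_of_nonneg_left (hsmooth σ o) (hp.nonneg σ)
    _ = lam * SF o + μ * ∑ σ, p σ * SF σ := by
        simp only [mul_add, sum_add_distrib, mul_left_comm (p _), ← mul_sum, ← sum_mul,
          hp.sum_eq_one, one_mul]

end IsCoarseCorrelatedEquilibrium

end SmoothGame

theorem le_div_one_sub_of_le_add_mul {x a μ : ℝ} (hμ : μ < 1) (h : x ≤ a + μ * x) :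
    x ≤ a / (1 - μ) := by
  rw [le_div_iff₀ (sub_pos.mpr hμ)]
  linarith

theorem stmt11_general {n : ℕ} {S : Fin n → Type} [∀ i, Fintype (S i)]
    (c : ((i : Fin n) → S i) → Fin n → ℝ) (SF : ((i : Fin n) → S i) → ℝ)
    (hsb : ∀ σ, SF σ ≤ ∑ i, c σ i)
    (lam μ : ℝ) (hμ : μ < 1)
    (hsmooth : ∀ σ σ' : (i : Fin n) → S i,
      (∑ i, c (Function.update σ i (σ' i)) i) ≤ lam * SF σ' + μ * SF σ)
    (p : ((i : Fin n) → S i) → ℝ) (hp : ∀ σ, 0 ≤ p σ) (hp1 : ∑ σ, p σ = 1)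
    (hcce : ∀ (i : Fin n) (x : S i),
      (∑ σ, p σ * c σ i) ≤ ∑ σ, p σ * c (Function.update σ i x) i)
    (o : (i : Fin n) → S i) :
    (∑ σ, p σ * SF σ) ≤ (lam / (1 - μ)) * SF o := by
  have hCCE : IsCoarseCorrelatedEquilibrium c p := ⟨hp, hp1, hcce⟩
  rw [div_mul_eq_mul_div]
  exact le_div_one_sub_of_le_add_mul hμ (hCCE.expected_social_le hsb hsmooth o)

/-- Extension Theorem for smooth games: if a cost minimization game is
(λ,μ)-smooth under a sum-bounded social function SF with λ > 0 and μ < 1, then every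
coarse correlated equilibrium p and social optimum o with SF(o) > 0 satisfy
E_p[SF] ≤ (λ/(1−μ))·SF(o). -/
theorem stmt11 {n : ℕ} {S : Fin n → Type} [∀ i, Fintype (S i)] [∀ i, DecidableEq (S i)]
    (c : ((i : Fin n) → S i) → Fin n → ℝ) (SF : ((i : Fin n) → S i) → ℝ)
    (hc : ∀ σ i, 0 ≤ c σ i) (hSFnn : ∀ σ, 0 ≤ SF σ)
    (hsb : ∀ σ, SF σ ≤ ∑ i, c σ i)
    (lam μ : ℝ) (hlam : 0 < lam) (hμ : μ < 1)
    (hsmooth : ∀ σ σ' : (i : Fin n) → S i,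
      (∑ i, c (Function.update σ i (σ' i)) i) ≤ lam * SF σ' + μ * SF σ)
    (p : ((i : Fin n) → S i) → ℝ) (hp : ∀ σ, 0 ≤ p σ) (hp1 : ∑ σ, p σ = 1)
    (hcce : ∀ (i : Fin n) (x : S i),
      (∑ σ, p σ * c σ i) ≤ ∑ σ, p σ * c (Function.update σ i x) i)
    (o : (i : Fin n) → S i) (hopt : ∀ τ, SF o ≤ SF τ) (ho : 0 < SF o) :
    (∑ σ, p σ * SF σ) ≤ (lam / (1 - μ)) * SF o :=
  stmt11_general c SF hsb lam μ hμ hsmooth p hp hp1 hcce o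
end

section
/- If a class of games C is (λ,μ)-smooth (every game in C with a pure Nash equilibrium is (λ,μ)-smooth) under a sum-bounded social function, with λ > 0 and μ < 1, then the worst-case coarse-correlated price of anarchy over C is at most λ/(1−μ); in particular the supremum over G in C with equilibria of PPoA(SF,G) is at most inf over (λ,μ) ∈ A(C) of λ/(1−μ), i.e., at most the robust price of anarchy. -/
open Finset

variable {n : ℕ} {S : Fin n → Type}

/-- A cost minimization game with player set `Fin n` and strategy sets `S i`:
cost functions `c` and a social function `SF`. -/
structure CMGame (n : ℕ) (S : Fin n → Type) where
  c : ((i : Fin n) → S i) → Fin n → ℝ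
  SF : ((i : Fin n) → S i) → ℝ

def CMGame.smooth (G : CMGame n S) (lam μ : ℝ) [∀ i, Fintype (S i)] : Prop :=
  ∀ σ σ' : (i : Fin n) → S i,
    (∑ i, G.c (Function.update σ i (σ' i)) i) ≤ lam * G.SF σ' + μ * G.SF σ

def CMGame.sumBounded (G : CMGame n S) [∀ i, Fintype (S i)] : Prop :=
  ∀ σ, G.SF σ ≤ ∑ i, G.c σ i

def CMGame.isPNE (G : CMGame n S) (σ : (i : Fin n) → S i) : Prop :=
  ∀ (i : Fin n) (x : S i), G.c σ i ≤ G.c (Function.update σ i x) i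

def CMGame.isCCE (G : CMGame n S) [∀ i, Fintype (S i)] [∀ i, DecidableEq (S i)]
    (p : ((i : Fin n) → S i) → ℝ) : Prop :=
  (∀ σ, 0 ≤ p σ) ∧ (∑ σ, p σ = 1) ∧
  ∀ (i : Fin n) (x : S i),
    (∑ σ, p σ * G.c σ i) ≤ ∑ σ, p σ * G.c (Function.update σ i x) i

/-! Smoothness applied at an equilibrium `σ` against the optimum `o` gives
`SF σ ≤ ∑ᵢ cᵢ(σ) ≤ ∑ᵢ cᵢ(oᵢ, σ₋ᵢ) ≤ λ SF o + μ SF σ`, where the middle step is the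
equilibrium condition; rearranging with `μ < 1` bounds the ratio by `λ / (1 - μ)`. For a coarse
correlated equilibrium the same chain holds in expectation, since the equilibrium condition is
linear in the distribution. -/

lemma div_le_div_one_sub_of_le_add_mul {X b lam μ : ℝ} (hb : 0 < b) (hμ : μ < 1)
    (hX : X ≤ lam * b + μ * X) : X / b ≤ lam / (1 - μ) := by
  rw [div_le_div_iff₀ hb (sub_pos.mpr hμ)]
  linarith

lemma sum_mul_sum_comm {α β R : Type*} [Fintype α] [Fintype β] [CommSemiring R] (p : α → R)
    (f : α → β → R) : ∑ a, p a * ∑ b, f a b = ∑ b, ∑ a, p a * f a b := by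
  simp only [mul_sum]
  exact sum_comm

namespace CMGame

variable [∀ i, Fintype (S i)] {G : CMGame n S} {lam μ : ℝ}

lemma SF_le_of_isPNE (hsb : G.sumBounded) (hsm : G.smooth lam μ) {σ : (i : Fin n) → S i}
    (hσ : G.isPNE σ) (o : (i : Fin n) → S i) : G.SF σ ≤ lam * G.SF o + μ * G.SF σ :=
  calc G.SF σ ≤ ∑ i, G.c σ i := hsb σ
    _ ≤ ∑ i, G.c (Function.update σ i (o i)) i := sum_le_sum fun i _ => hσ i (o i)
    _ ≤ lam * G.SF o + μ * G.SF σ := hsm σ o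

variable [∀ i, DecidableEq (S i)]

lemma expected_SF_le_of_isCCE (hsb : G.sumBounded) (hsm : G.smooth lam μ)
    {p : ((i : Fin n) → S i) → ℝ} (hp : G.isCCE p) (o : (i : Fin n) → S i) :
    ∑ σ, p σ * G.SF σ ≤ lam * G.SF o + μ * ∑ σ, p σ * G.SF σ := by
  obtain ⟨hp_nonneg, hp_sum, hp_dev⟩ := hp
  calc ∑ σ, p σ * G.SF σ ≤ ∑ σ, p σ * ∑ i, G.c σ i :=
        sum_le_sum fun σ _ => mul_le_mul_of_nonneg_left (hsb σ) (hp_nonneg σ)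
    _ = ∑ i, ∑ σ, p σ * G.c σ i := sum_mul_sum_comm p G.c
    _ ≤ ∑ i, ∑ σ, p σ * G.c (Function.update σ i (o i)) i :=
        sum_le_sum fun i _ => hp_dev i (o i)
    _ = ∑ σ, p σ * ∑ i, G.c (Function.update σ i (o i)) i :=
        (sum_mul_sum_comm p fun σ i => G.c (Function.update σ i (o i)) i).symm
    _ ≤ ∑ σ, p σ * (lam * G.SF o + μ * G.SF σ) :=
        sum_le_sum fun σ _ => mul_le_mul_of_nonneg_left (hsm σ o) (hp_nonneg σ)
    _ = (∑ σ, p σ) * (lam * G.SF o) + μ * ∑ σ, p σ * G.SF σ := by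
        rw [sum_mul, mul_sum, ← sum_add_distrib]
        exact sum_congr rfl fun σ _ => by ring
    _ = lam * G.SF o + μ * ∑ σ, p σ * G.SF σ := by rw [hp_sum, one_mul]

end CMGame

theorem stmt12_general [∀ i, Fintype (S i)] [∀ i, DecidableEq (S i)]
    (C : Set (CMGame n S))
    (hsb : ∀ G ∈ C, G.sumBounded)
    (lam μ : ℝ) (hμ : μ < 1)
    (hA : ∀ G ∈ C, (∃ σ, G.isPNE σ) → G.smooth lam μ) :
    ∀ G ∈ C, (∃ σ, G.isPNE σ) →
      ∀ (o : (i : Fin n) → S i), (∀ τ, G.SF o ≤ G.SF τ) → 0 < G.SF o →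
        (∀ σ, G.isPNE σ → G.SF σ / G.SF o ≤ lam / (1 - μ)) ∧
        (∀ p, G.isCCE p → (∑ σ, p σ * G.SF σ) / G.SF o ≤ lam / (1 - μ)) := by
  intro G hG hex o _ hpos
  have hsm := hA G hG hex
  exact ⟨fun σ hσ => div_le_div_one_sub_of_le_add_mul hpos hμ
      (CMGame.SF_le_of_isPNE (hsb G hG) hsm hσ o),
    fun p hp => div_le_div_one_sub_of_le_add_mul hpos hμ
      (CMGame.expected_SF_le_of_isCCE (hsb G hG) hsm hp o)⟩

/-- if every game of the class `C` admitting a pure Nash equilibrium is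
(λ,μ)-smooth under its sum-bounded social function, with λ > 0 and μ < 1, then for
every such game both the pure and the coarse correlated price of anarchy are at most
λ/(1−μ); hence the worst-case (pure and coarse correlated) price of anarchy over `C`
is at most the robust price of anarchy. -/
theorem stmt12 [∀ i, Fintype (S i)] [∀ i, DecidableEq (S i)]
    (C : Set (CMGame n S))
    (hnn : ∀ G ∈ C, (∀ σ i, 0 ≤ G.c σ i) ∧ (∀ σ, 0 ≤ G.SF σ))
    (hsb : ∀ G ∈ C, G.sumBounded)
    (lam μ : ℝ) (hlam : 0 < lam) (hμ : μ < 1)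
    (hA : ∀ G ∈ C, (∃ σ, G.isPNE σ) → G.smooth lam μ) :
    ∀ G ∈ C, (∃ σ, G.isPNE σ) →
      ∀ (o : (i : Fin n) → S i), (∀ τ, G.SF o ≤ G.SF τ) → 0 < G.SF o →
        (∀ σ, G.isPNE σ → G.SF σ / G.SF o ≤ lam / (1 - μ)) ∧
        (∀ p, G.isCCE p → (∑ σ, p σ * G.SF σ) / G.SF o ≤ lam / (1 - μ)) :=
  stmt12_general C hsb lam μ hμ hA
end

section
/- In the representative congestion model, for any two strategy profiles σ, o (each player choosing one of her two strategies σ*_i or o*_i) and any resource e(P,Q), the set of constraints of the dual program DP_PNE(SF, T*_w, σ, o) is a subset of the set of constraints of DP_PNE(SF, T*_w, σ*, o*); hence any feasible dual solution for (σ*, o*) with objective γ* certifies that the value of the game induced by any feasible primal solution relative to any choice of equilibrium/optimum profile pair is at most γ*. -/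
open Finset

/-- The dual constraint of `DP_PNE(SUM, ...)` at a pair of player sets `(P,Q)` and
basis index `k` (it depends only on this data). -/
def DualC {n r : ℕ} (w : Fin n → ℝ) (f : Fin r → ℝ → ℝ)
    (α β : Fin n → Fin n → ℝ) (ε : ℝ) (y : Fin n → ℝ) (γ : ℝ)
    (P Q : Finset (Fin n)) (k : Fin r) : Prop :=
  (∑ i ∈ P \ Q, y i * f k (∑ i' ∈ P, w i') * (∑ j ∈ P, α i j * w j))
    - (1 + ε) * ∑ i ∈ Q \ P,
        y i * f k ((∑ i' ∈ P, w i') + w i) * (α i i * w i + ∑ j ∈ P, α i j * w j)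
    + γ * f k (∑ i' ∈ Q, w i') * (∑ i, ∑ j ∈ Q, β i j * w j)
  ≥ f k (∑ i' ∈ P, w i') * (∑ i, ∑ j ∈ P, β i j * w j)

/-- in the representative congestion model, for any pair of strategy
profiles `σ, o` (each player choosing one of her two strategies `σ*_i`, `o*_i`), every
dual constraint of `DP_PNE(SF, T*_w, σ, o)` already occurs among the dual constraints
of `DP_PNE(SF, T*_w, σ*, o*)`; hence any feasible dual solution for `(σ*, o*)` is
feasible for `(σ, o)`. -/
theorem stmt18 {n r : ℕ} (w : Fin n → ℝ) (hw : ∀ i, 0 < w i)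
    (f : Fin r → ℝ → ℝ) (α β : Fin n → Fin n → ℝ) (ε : ℝ) (hε : 0 ≤ ε)
    (σ o : Fin n → Finset (RepRes n))
    (hσ : ∀ i, σ i = sstar n i ∨ σ i = ostar n i)
    (ho : ∀ i, o i = sstar n i ∨ o i = ostar n i) :
    -- every constraint arising from (σ, o) appears among those arising from (σ*, o*)
    (∀ e : RepRes n, ∃ ebar : RepRes n,
      univ.filter (fun i => e ∈ σ i) = univ.filter (fun i => ebar ∈ sstar n i) ∧
      univ.filter (fun i => e ∈ o i) = univ.filter (fun i => ebar ∈ ostar n i)) ∧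
    -- hence dual feasibility for (σ*, o*) implies dual feasibility for (σ, o)
    (∀ (y : Fin n → ℝ) (γ : ℝ), (∀ i, 0 ≤ y i) → 0 ≤ γ →
      (∀ (ebar : RepRes n) (k : Fin r),
        DualC w f α β ε y γ (univ.filter (fun i => ebar ∈ sstar n i))
          (univ.filter (fun i => ebar ∈ ostar n i)) k) →
      ∀ (e : RepRes n) (k : Fin r),
        DualC w f α β ε y γ (univ.filter (fun i => e ∈ σ i))
          (univ.filter (fun i => e ∈ o i)) k) := by
  have key : ∀ e : RepRes n, ∃ ebar : RepRes n,
      univ.filter (fun i => e ∈ σ i) = univ.filter (fun i => ebar ∈ sstar n i) ∧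
      univ.filter (fun i => e ∈ o i) = univ.filter (fun i => ebar ∈ ostar n i) := by
    intro e
    refine ⟨(univ.filter (fun i => e ∈ σ i), univ.filter (fun i => e ∈ o i)), ?_, ?_⟩ <;>
      · ext i
        simp [sstar, ostar]
  refine ⟨key, ?_⟩
  intro y γ _ _ hfeas e k
  obtain ⟨ebar, h1, h2⟩ := key e
  rw [h1, h2]
  exact hfeas ebar k
end
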